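/- Let ℏ, m, g > 0. Let ψ⁽¹⁾ : ℝ × ℝ → ℂ and ψ⁽²⁾ : ℝ × [0,∞) × ℝ → ℂ be smooth (ψ⁽²⁾ smooth up to the boundary y = 0), with last argument the time t. Suppose that for all x and t the interior–boundary condition ψ⁽²⁾(x,0,t) = −(2mg/ℏ²) ψ⁽¹⁾(x,t) holds, and that the Schrödinger equations iℏ ∂_t ψ⁽¹⁾(x,t) = −(ℏ²/2m) ∂²ₓ ψ⁽¹⁾(x,t) + g ∂_y ψ⁽²⁾(x,0,t) and iℏ ∂_t ψ⁽²⁾(x,y,t) = −(ℏ²/2m)(∂²ₓ + ∂²_y) ψ⁽²⁾(x,y,t) hold for all x, all y > 0 and all t. Then for all x and t: ∂_t |ψ⁽¹⁾(x,t)|² = −∂ₓ j⁽¹⁾(x,t) − j_y⁽²⁾(x,0,t), where j⁽¹⁾ = (ℏ/m) Im[ψ⁽¹⁾* ∂ₓ ψ⁽¹⁾] and j_y⁽²⁾ = (ℏ/m) Im[ψ⁽²⁾* ∂_y ψ⁽²⁾]. -/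

import Mathlib

open Complex
open scoped ContDiff

/-- **Probability balance for the toy IBC model (Dirichlet-type IBC).**
Configuration space: `Q¹ = ℝ` and the half plane `Q² = {(x,y) : y ≥ 0}`; `ψ2` is smooth
up to the boundary `y = 0`, formalized as a smooth function on all of `ℝ × ℝ × ℝ`
(last argument is time). -/
theorem probability_balance_dirichlet_IBC
    (ℏ m g : ℝ) (hℏ : 0 < ℏ) (hm : 0 < m) (hg : 0 < g)
    (ψ1 : ℝ → ℝ → ℂ) (ψ2 : ℝ → ℝ → ℝ → ℂ)
    (hψ1 : ContDiff ℝ (⊤ : ℕ∞) (fun p : ℝ × ℝ => ψ1 p.1 p.2))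
    (hψ2 : ContDiff ℝ (⊤ : ℕ∞) (fun p : ℝ × ℝ × ℝ => ψ2 p.1 p.2.1 p.2.2))
    -- interior–boundary condition: ψ²(x,0,t) = −(2mg/ℏ²) ψ¹(x,t)
    (hIBC : ∀ x t : ℝ, ψ2 x 0 t = -(2 * m * g / ℏ ^ 2 : ℝ) * ψ1 x t)
    -- Schrödinger equation on the first sector:
    -- iℏ ∂_t ψ¹ = −(ℏ²/2m) ∂²ₓ ψ¹ + g ∂_y ψ²(x,0,t)
    (hSch1 : ∀ x t : ℝ,
      Complex.I * (ℏ : ℂ) * deriv (fun s => ψ1 x s) t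
        = -((ℏ : ℂ) ^ 2 / (2 * (m : ℂ))) * deriv (deriv (fun u => ψ1 u t)) x
          + (g : ℂ) * deriv (fun v => ψ2 x v t) 0)
    -- Schrödinger equation on the second sector, for y > 0:
    (hSch2 : ∀ x y t : ℝ, 0 < y →
      Complex.I * (ℏ : ℂ) * deriv (fun s => ψ2 x y s) t
        = -((ℏ : ℂ) ^ 2 / (2 * (m : ℂ)))
            * (deriv (deriv (fun u => ψ2 u y t)) x
               + deriv (deriv (fun v => ψ2 x v t)) y)) :
    -- conclusion: ∂_t |ψ¹|² = −∂ₓ j¹ − j_y²(x,0,t)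
    ∀ x t : ℝ,
      deriv (fun s => ‖ψ1 x s‖ ^ 2) t
        = - deriv (fun u =>
              (ℏ / m) * ((starRingEnd ℂ) (ψ1 u t) * deriv (fun w => ψ1 w t) u).im) x
          - (ℏ / m) * ((starRingEnd ℂ) (ψ2 x 0 t) * deriv (fun v => ψ2 x v t) 0).im := by
  intro x t
  have hψ1' : ContDiff ℝ ∞ (fun p : ℝ × ℝ => ψ1 p.1 p.2) := hψ1.of_le (by simp)
  have h1le : (1 : WithTop ℕ∞) ≤ ∞ := by exact_mod_cast le_top
  -- one-variable slices
  have hfx : ContDiff ℝ ∞ (fun u : ℝ => ψ1 u t) :=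
    hψ1'.comp (contDiff_id.prodMk contDiff_const)
  have hft : ContDiff ℝ ∞ (fun s : ℝ => ψ1 x s) :=
    hψ1'.comp (contDiff_const.prodMk contDiff_id)
  have hfx' : ContDiff ℝ ∞ (deriv (fun u : ℝ => ψ1 u t)) :=
    (contDiff_infty_iff_deriv.mp hfx).2
  set D := deriv (fun s => ψ1 x s) t with hD
  set A := deriv (deriv (fun u => ψ1 u t)) x with hA
  set B := deriv (fun v => ψ2 x v t) 0 with hB
  set z := ψ1 x t with hz
  -- HasDerivAt facts
  have hDt : HasDerivAt (fun s => ψ1 x s) D t :=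
    ((hft.differentiable (by simp)) t).hasDerivAt
  have hXx : HasDerivAt (fun u => ψ1 u t) (deriv (fun u : ℝ => ψ1 u t) x) x :=
    ((hfx.differentiable (by simp)) x).hasDerivAt
  have hAx : HasDerivAt (deriv (fun u : ℝ => ψ1 u t)) A x :=
    ((hfx'.differentiable (by simp)) x).hasDerivAt
  -- LHS: time derivative of the squared norm
  have hnorm : (fun s => ‖ψ1 x s‖ ^ 2)
      = fun s => ((starRingEnd ℂ) (ψ1 x s) * ψ1 x s).re := by
    funext s
    simp [Complex.mul_re, Complex.conj_re, Complex.conj_im,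
      Complex.sq_norm, Complex.normSq_apply]
  have hconjDt : HasDerivAt (fun s => (starRingEnd ℂ) (ψ1 x s)) ((starRingEnd ℂ) D) t := by
    simpa [Complex.star_def] using hDt.star
  have hmulT : HasDerivAt (fun s => (starRingEnd ℂ) (ψ1 x s) * ψ1 x s)
      ((starRingEnd ℂ) D * z + (starRingEnd ℂ) z * D) t := hconjDt.mul hDt
  have hLHS : deriv (fun s => ‖ψ1 x s‖ ^ 2) t
      = ((starRingEnd ℂ) D * z + (starRingEnd ℂ) z * D).re := by
    rw [hnorm]
    exact (Complex.reCLM.hasFDerivAt.comp_hasDerivAt t hmulT).deriv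
  -- RHS: space derivative of the current
  have hconjXx : HasDerivAt (fun u => (starRingEnd ℂ) (ψ1 u t))
      ((starRingEnd ℂ) (deriv (fun u : ℝ => ψ1 u t) x)) x := by
    simpa [Complex.star_def] using hXx.star
  have hmulX : HasDerivAt (fun u => (starRingEnd ℂ) (ψ1 u t) * deriv (fun w => ψ1 w t) u)
      ((starRingEnd ℂ) (deriv (fun u : ℝ => ψ1 u t) x) * deriv (fun u : ℝ => ψ1 u t) x
        + (starRingEnd ℂ) z * A) x := hconjXx.mul hAx
  have hJ : deriv (fun u =>
        (ℏ / m) * ((starRingEnd ℂ) (ψ1 u t) * deriv (fun w => ψ1 w t) u).im) x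
      = (ℏ / m) * ((starRingEnd ℂ) (deriv (fun u : ℝ => ψ1 u t) x)
            * deriv (fun u : ℝ => ψ1 u t) x + (starRingEnd ℂ) z * A).im := by
    have him : HasDerivAt (fun u =>
        ((starRingEnd ℂ) (ψ1 u t) * deriv (fun w => ψ1 w t) u).im)
        (((starRingEnd ℂ) (deriv (fun u : ℝ => ψ1 u t) x) * deriv (fun u : ℝ => ψ1 u t) x
          + (starRingEnd ℂ) z * A).im) x :=
      Complex.imCLM.hasFDerivAt.comp_hasDerivAt x hmulX
    exact (him.const_mul (ℏ / m)).deriv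
  rw [hLHS, hJ, hIBC x t]
  -- real components of the Schrödinger equation
  have h1 : Complex.I * ((ℏ:ℝ):ℂ) * D = -(((ℏ^2/(2*m) : ℝ)):ℂ) * A + ((g:ℝ):ℂ) * B := by
    push_cast
    exact hSch1 x t
  have hre := congrArg Complex.re h1
  have him := congrArg Complex.im h1
  simp only [Complex.mul_re, Complex.mul_im, Complex.add_re, Complex.add_im, Complex.I_re,
    Complex.I_im, Complex.ofReal_re, Complex.ofReal_im, Complex.neg_re, Complex.neg_im]
    at hre him
  have hℏ0 : ℏ ≠ 0 := ne_of_gt hℏ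
  have hm0 : m ≠ 0 := ne_of_gt hm
  have e1 : D.im = (ℏ/(2*m)) * A.re - (g/ℏ) * B.re := by
    field_simp at hre ⊢
    linarith
  have e2 : D.re = -(ℏ/(2*m)) * A.im + (g/ℏ) * B.im := by
    field_simp at him ⊢
    linarith
  simp only [map_mul, Complex.conj_ofReal, Complex.mul_re, Complex.mul_im, Complex.add_re,
    Complex.add_im, Complex.conj_re, Complex.conj_im, Complex.ofReal_re, Complex.ofReal_im,
    Complex.neg_re, Complex.neg_im, e1, e2]
  field_simp
  ring
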